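/- arXiv:2406.19499 — 2 statements merged into one kernel-verified Lean document; each statement's English description precedes it below -/
import Mathlib

section
/- There exist constants c > 0 and C > 0, depending only on N and the potentials V_1, …, V_{N−1}, such that for every (p,q) ∈ ℝ^N × ℝ^N and every 1 ≤ j ≤ N−1 one has H(p,q) · ξ_j² + (L_F ξ_j)² ≥ c · p_{j+1}² − C · p_j². -/
open Real Finset

noncomputable section

/-- Lie derivative of `g` along the vector field `F`. -/
def LieD {E : Type*} [NormedAddCommGroup E] [NormedSpace ℝ E]
    (F : E → E) (g : E → ℝ) (x : E) : ℝ :=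
  fderiv ℝ g x (F x)

/-- Phase space of a chain of `N` rotators: `(p, q)`. -/
abbrev RotState (N : ℕ) : Type := (Fin N → ℝ) × (Fin N → ℝ)

/-- Momentum with 0-based natural index, `0` out of range. -/
def pc {N : ℕ} (x : RotState N) (i : ℕ) : ℝ := if h : i < N then x.1 ⟨i, h⟩ else 0

/-- Position with 0-based natural index, `0` out of range. -/
def qc {N : ℕ} (x : RotState N) (i : ℕ) : ℝ := if h : i < N then x.2 ⟨i, h⟩ else 0

/-- `ξ_i = −V_i'(q_i − q_{i+1})` (0-based index `i`). -/
def xi (N : ℕ) (V : ℕ → ℝ → ℝ) (i : ℕ) (x : RotState N) : ℝ :=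
  -(deriv (V i) (qc x i - qc x (i + 1)))

/-- The explicit formula `L_F ξ_i = −(p_i − p_{i+1}) V_i''(q_i − q_{i+1})`. -/
def LFxi (N : ℕ) (V : ℕ → ℝ → ℝ) (i : ℕ) (x : RotState N) : ℝ :=
  -((pc x i - pc x (i + 1)) * deriv (deriv (V i)) (qc x i - qc x (i + 1)))

/-- Hamiltonian of the rotator chain. -/
def Ham (N : ℕ) (V : ℕ → ℝ → ℝ) (x : RotState N) : ℝ :=
  ∑ i : Fin N, (x.1 i) ^ 2 / 2 + ∑ i ∈ Finset.range (N - 1), V i (qc x i - qc x (i + 1))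

/-- Vector field of the damped rotator chain. -/
def Frot (N : ℕ) (V : ℕ → ℝ → ℝ) (x : RotState N) : RotState N :=
  (fun i => xi N V i x - (if (i : ℕ) = 0 then x.1 i else xi N V ((i : ℕ) - 1) x),
   fun i => x.1 i)

/-- The Lyapunov function `W`. -/
def Wrot (N : ℕ) (V : ℕ → ℝ → ℝ) (a : ℕ → ℝ) (x : RotState N) : ℝ :=
  a 0 * Ham N V x ^ (2 * N - 1) -
    ∑ i ∈ Finset.range (N - 1),
      (a (2 * i + 1) * Ham N V x ^ (2 * (N - 1) - (2 * i + 1)) * (pc x i * xi N V i x)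
        + a (2 * i + 2) * Ham N V x ^ (2 * (N - 1) - (2 * i + 2)) * (xi N V i x * LFxi N V i x))

/-- Standing assumptions on the interaction potentials. -/
structure RotAssumptions (N : ℕ) (V : ℕ → ℝ → ℝ) : Prop where
  smooth : ∀ i < N - 1, ContDiff ℝ 3 (V i)
  periodic : ∀ i < N - 1, Function.Periodic (V i) 1
  ge_one : ∀ i < N - 1, ∀ x : ℝ, 1 ≤ V i x
  nondeg : ∀ i < N - 1, ∀ x : ℝ, (deriv (V i) x) ^ 2 + (deriv (deriv (V i)) x) ^ 2 ≠ 0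
  top : ∀ i, N - 1 ≤ i → V i = fun _ => 0

/-!
With `u = p_i`, `v = p_{i+1}`, `A = V_i'` and `B = V_i''` at `q_i − q_{i+1}`, the left-hand side is
`H A² + (u − v)² B²`. Since the potentials are nonnegative, `H ≥ v²/2`, and `(u − v)² ≥ v²/2 − u²`,
so it is at least `(v²/2)(A² + B²) − u² B²`. As `V_i'` and `V_i''` are continuous, periodic and never
vanish together, `A² + B²` is bounded below by a positive constant and `B²` is bounded above.
-/

open Filter Topology

theorem Function.Periodic.deriv {f : ℝ → ℝ} {c : ℝ} (hf : Function.Periodic f c) :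
    Function.Periodic (_root_.deriv f) c := fun x => by
  rw [← deriv_comp_add_const, show (fun y => f (y + c)) = f from funext hf]

theorem Function.Periodic.eventually_forall_le {f : ℝ → ℝ} {c : ℝ} (hp : Function.Periodic f c)
    (hc : c ≠ 0) (hf : Continuous f) (hpos : ∀ x, 0 < f x) :
    ∀ᶠ m in 𝓝[>] 0, ∀ x, m ≤ f x := by
  obtain ⟨_, ⟨x₀, rfl⟩, hmin⟩ :=
    (hp.compact_of_continuous hc hf).exists_isLeast (Set.range_nonempty f)
  filter_upwards [Ioo_mem_nhdsGT (hpos x₀)] with m hm x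
  exact hm.2.le.trans (hmin ⟨x, rfl⟩)

theorem Function.Periodic.eventually_forall_ge {f : ℝ → ℝ} {c : ℝ} (hp : Function.Periodic f c)
    (hc : c ≠ 0) (hf : Continuous f) :
    ∀ᶠ M in atTop, ∀ x, f x ≤ M := by
  obtain ⟨M₀, hM₀⟩ := (hp.compact_of_continuous hc hf).bddAbove
  filter_upwards [eventually_ge_atTop M₀] with M hM x
  exact (hM₀ ⟨x, rfl⟩).trans hM

section PeriodicPotential

variable {f : ℝ → ℝ} {c : ℝ}

theorem eventually_forall_le_deriv_sq_add_deriv_deriv_sq (hf : ContDiff ℝ 2 f)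
    (hp : Function.Periodic f c) (hc : c ≠ 0)
    (hnd : ∀ x, deriv f x ^ 2 + deriv (deriv f) x ^ 2 ≠ 0) :
    ∀ᶠ m in 𝓝[>] 0, ∀ x, m ≤ deriv f x ^ 2 + deriv (deriv f) x ^ 2 := by
  have hcont : Continuous (fun x => deriv f x ^ 2 + deriv (deriv f) x ^ 2) := by
    have := hf.continuous_deriv one_le_two
    have := hf.deriv'.continuous_deriv le_rfl
    fun_prop
  refine Function.Periodic.eventually_forall_le (fun x => ?_) hc hcont
    fun x => (hnd x).symm.lt_of_le (by positivity)
  simp only [hp.deriv x, hp.deriv.deriv x]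

theorem eventually_forall_deriv_deriv_sq_le (hf : ContDiff ℝ 2 f)
    (hp : Function.Periodic f c) (hc : c ≠ 0) :
    ∀ᶠ M in atTop, ∀ x, deriv (deriv f) x ^ 2 ≤ M :=
  Function.Periodic.eventually_forall_ge (fun x => by simp only [hp.deriv.deriv x]) hc
    ((hf.deriv'.continuous_deriv le_rfl).pow 2)

end PeriodicPotential

theorem half_sq_pc_le_Ham {N : ℕ} {V : ℕ → ℝ → ℝ} (hV : ∀ i < N - 1, ∀ y, 0 ≤ V i y)
    (x : RotState N) {i : ℕ} (hi : i < N) : pc x i ^ 2 / 2 ≤ Ham N V x := by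
  have hkin : x.1 ⟨i, hi⟩ ^ 2 / 2 ≤ ∑ j : Fin N, x.1 j ^ 2 / 2 :=
    Finset.single_le_sum (f := fun j : Fin N => x.1 j ^ 2 / 2) (fun j _ => by positivity)
      (Finset.mem_univ _)
  have hpot : 0 ≤ ∑ j ∈ Finset.range (N - 1), V j (qc x j - qc x (j + 1)) :=
    Finset.sum_nonneg fun j hj => hV j (Finset.mem_range.mp hj) _
  rw [Ham, pc, dif_pos hi]
  linarith

theorem half_mul_sq_sub_mul_sq_le {H A B u v m M : ℝ} (hH : v ^ 2 / 2 ≤ H)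
    (hm : m ≤ A ^ 2 + B ^ 2) (hM : B ^ 2 ≤ M) :
    m / 2 * v ^ 2 - M * u ^ 2 ≤ H * A ^ 2 + ((u - v) * B) ^ 2 := by
  have hdiff : v ^ 2 / 2 - u ^ 2 ≤ (u - v) ^ 2 := by nlinarith [sq_nonneg (2 * u - v)]
  calc m / 2 * v ^ 2 - M * u ^ 2
      ≤ v ^ 2 / 2 * (A ^ 2 + B ^ 2) - u ^ 2 * B ^ 2 := by
        linarith [mul_le_mul_of_nonneg_left hm (sq_nonneg v),
          mul_le_mul_of_nonneg_left hM (sq_nonneg u)]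
    _ = v ^ 2 / 2 * A ^ 2 + (v ^ 2 / 2 - u ^ 2) * B ^ 2 := by ring
    _ ≤ H * A ^ 2 + (u - v) ^ 2 * B ^ 2 := by
        gcongr
    _ = H * A ^ 2 + ((u - v) * B) ^ 2 := by ring

theorem stmt4_general (N : ℕ) (V : ℕ → ℝ → ℝ) (hV : RotAssumptions N V) :
    ∃ c > (0 : ℝ), ∃ C > (0 : ℝ), ∀ x : RotState N, ∀ i < N - 1,
      c * pc x (i + 1) ^ 2 - C * pc x i ^ 2
        ≤ Ham N V x * xi N V i x ^ 2 + LFxi N V i x ^ 2 := by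
  have hlower : ∀ᶠ m in 𝓝[>] 0, ∀ i ∈ Finset.range (N - 1),
      ∀ y, m ≤ deriv (V i) y ^ 2 + deriv (deriv (V i)) y ^ 2 :=
    (eventually_all_finset _).2 fun i hi =>
      eventually_forall_le_deriv_sq_add_deriv_deriv_sq ((hV.smooth i (mem_range.1 hi)).of_le
        (by norm_num)) (hV.periodic i (mem_range.1 hi)) one_ne_zero (hV.nondeg i (mem_range.1 hi))
  have hupper : ∀ᶠ M in atTop, ∀ i ∈ Finset.range (N - 1), ∀ y, deriv (deriv (V i)) y ^ 2 ≤ M :=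
    (eventually_all_finset _).2 fun i hi =>
      eventually_forall_deriv_deriv_sq_le ((hV.smooth i (mem_range.1 hi)).of_le (by norm_num))
        (hV.periodic i (mem_range.1 hi)) one_ne_zero
  obtain ⟨m, hm, hm₀⟩ := (hlower.and self_mem_nhdsWithin).exists
  obtain ⟨M, hM, hM₀⟩ := (hupper.and (eventually_gt_atTop 0)).exists
  refine ⟨m / 2, half_pos hm₀, M, hM₀, fun x i hi => ?_⟩
  have hH := half_sq_pc_le_Ham (fun j hj y => zero_le_one.trans (hV.ge_one j hj y)) x
    (show i + 1 < N by omega)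
  rw [xi, LFxi, neg_sq, neg_sq]
  exact half_mul_sq_sub_mul_sq_le hH (hm i (mem_range.2 hi) _) (hM i (mem_range.2 hi) _)

theorem stmt4 (N : ℕ) (hN : 2 ≤ N) (V : ℕ → ℝ → ℝ) (hV : RotAssumptions N V) :
    ∃ c > (0 : ℝ), ∃ C > (0 : ℝ), ∀ x : RotState N, ∀ i < N - 1,
      c * pc x (i + 1) ^ 2 - C * pc x i ^ 2
        ≤ Ham N V x * xi N V i x ^ 2 + LFxi N V i x ^ 2 :=
  stmt4_general N V hV
end
end

section
/- Let r ≥ 1, let F : ℝ^d → ℝ^d be a C^r-smooth vector field, let W : ℝ^d → ℝ be a C^{r+1}-smooth proper function, and let Q ∈ ℝ. Assume that for every x with W(x) > Q the vector (L_F W(x), L_F² W(x), …, L_F^r W(x)) is nonzero. Then there exist smooth positive functions φ, Φ : (Q,∞) → (0,∞) with φ ≤ Φ² such that for every x with W(x) > Q: |L_F W(x)| + Σ_{k=2}^{r} |L_F^k W(x)|² ≥ φ(W(x)), and |L_F^k W(x)| ≤ Φ(W(x)) for all 1 ≤ k ≤ r+1. -/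
open Finset Filter

set_option maxHeartbeats 1000000

noncomputable section

/-- Iterated Lie derivative `L_F^k g` of `g` along the vector field `F`. -/
def iterLie {E : Type*} [NormedAddCommGroup E] [NormedSpace ℝ E]
    (F : E → E) : ℕ → (E → ℝ) → E → ℝ
  | 0 => fun g => g
  | k + 1 => fun g x => fderiv ℝ (iterLie F k g) x (F x)

/-- Entire majorant lemma: given B, D with D n ≥ 1 tending to infinity, there is an
analytic function g on ℝ, nonnegative on nonnegative reals, with B n ≤ g s whenever D n ≤ s. -/
lemma exists_entire (B D : ℕ → ℝ) (hD1 : ∀ n, 1 ≤ D n) (hDtop : Tendsto D atTop atTop) :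
    ∃ g : ℝ → ℝ, ContDiff ℝ (⊤ : ℕ∞) g ∧ (∀ s : ℝ, 0 ≤ s → 0 ≤ g s) ∧
      (∀ n : ℕ, ∀ s : ℝ, D n ≤ s → B n ≤ g s) := by
  classical
  set c : ℕ → ℕ := fun n => Nat.clog 2 ⌈max (B n) 1⌉₊ with hc
  set k : ℕ → ℕ := fun n => n + ∑ m ∈ range (n + 1), c m with hk
  have hkmono : StrictMono k := by
    apply strictMono_nat_of_lt_succ
    intro n
    simp only [hk, Finset.sum_range_succ]
    omega
  have hkinj : Function.Injective k := hkmono.injective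
  have hkge : ∀ n, n + c n ≤ k n := by
    intro n
    have h : c n ≤ ∑ m ∈ range (n + 1), c m :=
      Finset.single_le_sum (f := c) (fun i _ => Nat.zero_le _) (by simp)
    simp only [hk]
    omega
  set Bp : ℕ → ℝ := fun n => max (B n) 0 with hBp
  have hBp0 : ∀ n, 0 ≤ Bp n := fun n => le_max_right _ _
  have hBpc : ∀ n, Bp n ≤ 2 ^ c n := by
    intro n
    have h1 : Bp n ≤ max (B n) 1 := max_le_max le_rfl zero_le_one
    have h2 : max (B n) 1 ≤ (⌈max (B n) 1⌉₊ : ℝ) := Nat.le_ceil _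
    have h3 : (⌈max (B n) 1⌉₊ : ℝ) ≤ ((2 ^ c n : ℕ) : ℝ) := by
      exact_mod_cast Nat.le_pow_clog one_lt_two _
    calc Bp n ≤ max (B n) 1 := h1
      _ ≤ _ := h2
      _ ≤ ((2 ^ c n : ℕ) : ℝ) := h3
      _ = 2 ^ c n := by push_cast; ring
  have hDpos : ∀ n, 0 < D n := fun n => lt_of_lt_of_le zero_lt_one (hD1 n)
  set a : ℕ → ℝ := fun n => Bp n / D n ^ k n with ha
  have ha0 : ∀ n, 0 ≤ a n := fun n => div_nonneg (hBp0 n) (le_of_lt (pow_pos (hDpos n) _))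
  set b : ℕ → ℝ := fun j => if h : ∃ n, k n = j then a h.choose else 0 with hb
  have hbk : ∀ n, b (k n) = a n := by
    intro n
    have hex : ∃ m, k m = k n := ⟨n, rfl⟩
    simp only [hb, dif_pos hex]
    have := hex.choose_spec
    rw [hkinj this]
  have hb0 : ∀ j, 0 ≤ b j := by
    intro j
    simp only [hb]
    split
    · exact ha0 _
    · exact le_rfl
  have hbz : ∀ j, j ∉ Set.range k → b j = 0 := by
    intro j hj
    simp only [hb]
    rw [dif_neg]
    rintro ⟨n, hn⟩
    exact hj ⟨n, hn⟩
  -- summability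
  have hsum : ∀ u : ℝ, 0 ≤ u → Summable (fun n => a n * u ^ k n) := by
    intro u hu
    have hev : ∀ᶠ n in atTop, ‖a n * u ^ k n‖ ≤ 1 * ‖(1/2 : ℝ) ^ n‖ := by
      filter_upwards [hDtop.eventually_ge_atTop (2 * u)] with n hn
      have hterm : a n * u ^ k n ≤ (1/2 : ℝ) ^ n := by
        have hDp := hDpos n
        have e1 : a n * u ^ k n = Bp n * (u / D n) ^ k n := by
          rw [div_pow]; simp only [ha]; ring
        have h2 : u / D n ≤ 1/2 := by
          rw [div_le_iff₀ hDp]; linarith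
        have h3 : (u / D n) ^ k n ≤ (1/2 : ℝ) ^ k n :=
          pow_le_pow_left₀ (by positivity) h2 _
        have h4 : ((1:ℝ)/2) ^ k n ≤ (1/2 : ℝ) ^ (n + c n) :=
          pow_le_pow_of_le_one (by norm_num) (by norm_num) (hkge n)
        calc a n * u ^ k n = Bp n * (u / D n) ^ k n := e1
          _ ≤ (2 ^ c n) * ((1/2 : ℝ) ^ (n + c n)) := by
              apply mul_le_mul (hBpc n) (h3.trans h4) (by positivity) (by positivity)
          _ = (1/2 : ℝ) ^ n := by
              rw [pow_add]
              have : (2:ℝ) ^ c n * (1/2:ℝ) ^ c n = 1 := by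
                rw [← mul_pow]; norm_num
              ring_nf
              rw [mul_comm] at this
              nlinarith [pow_nonneg (by norm_num : (0:ℝ) ≤ 1/2) n]
      have h0 : 0 ≤ a n * u ^ k n := mul_nonneg (ha0 n) (pow_nonneg hu _)
      rw [Real.norm_of_nonneg h0, Real.norm_of_nonneg (by positivity), one_mul]
      exact hterm
    exact summable_of_isBigO_nat
      (summable_geometric_of_lt_one (by norm_num) (by norm_num : (1/2 : ℝ) < 1))
      (Asymptotics.IsBigO.of_bound 1 hev)
  have hsumb : ∀ u : ℝ, 0 ≤ u → Summable (fun j => b j * u ^ j) := by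
    intro u hu
    refine (hkinj.summable_iff (f := fun j => b j * u ^ j) ?_).mp ?_
    · intro j hj
      simp [hbz j hj]
    · have : (fun n => b (k n) * u ^ k n) = fun n => a n * u ^ k n := by
        funext n; rw [hbk]
      simpa [Function.comp_def, this] using hsum u hu
  set p := FormalMultilinearSeries.ofScalars ℝ b with hp
  have hrad : p.radius = ⊤ := by
    apply FormalMultilinearSeries.radius_eq_top_of_summable_norm
    intro r
    have := hsumb r r.coe_nonneg
    apply this.congr
    intro j
    rw [FormalMultilinearSeries.ofScalars_norm]
    rw [Real.norm_of_nonneg (hb0 j)]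
  have hball : HasFPowerSeriesOnBall p.sum p 0 p.radius :=
    p.hasFPowerSeriesOnBall (by rw [hrad]; exact ENNReal.zero_lt_top)
  have hanal : AnalyticOnNhd ℝ p.sum Set.univ := by
    intro y _
    apply hball.analyticAt_of_mem
    rw [hrad]
    simp [EMetric.mem_ball, edist_lt_top]
  refine ⟨p.sum, hanal.contDiff, ?_, ?_⟩
  · intro u hu
    have hsum_eq : p.sum u = ∑' j, b j * u ^ j := by
      rw [hp, ← FormalMultilinearSeries.ofScalarsSum]
      rw [FormalMultilinearSeries.ofScalars_sum_eq]
      simp [smul_eq_mul]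
    rw [hsum_eq]
    exact tsum_nonneg fun j => mul_nonneg (hb0 j) (pow_nonneg hu _)
  · intro n u hDu
    have hu : (0:ℝ) ≤ u := le_trans (le_trans zero_le_one (hD1 n)) hDu
    have hsum_eq : p.sum u = ∑' j, b j * u ^ j := by
      rw [hp, ← FormalMultilinearSeries.ofScalarsSum]
      rw [FormalMultilinearSeries.ofScalars_sum_eq]
      simp [smul_eq_mul]
    rw [hsum_eq]
    have h1 : B n ≤ b (k n) * u ^ k n := by
      rw [hbk]
      have e : a n * D n ^ k n = Bp n :=
        div_mul_cancel₀ _ (ne_of_gt (pow_pos (hDpos n) _))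
      calc B n ≤ Bp n := le_max_left _ _
        _ = a n * D n ^ k n := e.symm
        _ ≤ a n * u ^ k n :=
            mul_le_mul_of_nonneg_left (pow_le_pow_left₀ (le_of_lt (hDpos n)) hDu _) (ha0 n)
    refine le_trans h1 (Summable.le_tsum (hsumb u hu) (k n) fun j _ => ?_)
    exact mul_nonneg (hb0 j) (pow_nonneg hu _)


lemma iterLie_contDiff {E : Type*} [NormedAddCommGroup E] [NormedSpace ℝ E]
    {F : E → E} {W : E → ℝ} {r : ℕ} (hF : ContDiff ℝ r F) (hW : ContDiff ℝ (r + 1) W) :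
    ∀ k, k ≤ r + 1 → ContDiff ℝ ((r + 1 - k : ℕ) : WithTop ℕ∞) (iterLie F k W) := by
  intro k
  induction k with
  | zero =>
    intro _
    show ContDiff ℝ ((r + 1 - 0 : ℕ) : WithTop ℕ∞) W
    have : ((r + 1 - 0 : ℕ) : WithTop ℕ∞) = (r : WithTop ℕ∞) + 1 := by
      push_cast [Nat.sub_zero]
      rfl
    rw [this]; exact hW
  | succ k ih =>
    intro hk
    have hk' : k ≤ r := by omega
    have h := ih (by omega)
    have hcast : ((r + 1 - k : ℕ) : WithTop ℕ∞) = ((r - k : ℕ) : WithTop ℕ∞) + 1 := by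
      have : (r + 1 - k : ℕ) = (r - k) + 1 := by omega
      rw [this]; push_cast; rfl
    rw [hcast] at h
    have h1 : ContDiff ℝ ((r - k : ℕ) : WithTop ℕ∞) (fderiv ℝ (iterLie F k W)) :=
      h.fderiv_right le_rfl
    have hF' : ContDiff ℝ ((r - k : ℕ) : WithTop ℕ∞) F :=
      hF.of_le (by exact_mod_cast Nat.cast_le.mpr (Nat.sub_le r k))
    have : ContDiff ℝ ((r - k : ℕ) : WithTop ℕ∞) fun x => fderiv ℝ (iterLie F k W) x (F x) :=
      h1.clm_apply hF'
    have hcast2 : ((r + 1 - (k + 1) : ℕ) : WithTop ℕ∞) = ((r - k : ℕ) : WithTop ℕ∞) := by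
      congr 1; omega
    rw [hcast2]
    exact this

lemma iterLie_continuous {E : Type*} [NormedAddCommGroup E] [NormedSpace ℝ E]
    {F : E → E} {W : E → ℝ} {r : ℕ} (hF : ContDiff ℝ r F) (hW : ContDiff ℝ (r + 1) W)
    {k : ℕ} (hk : k ≤ r + 1) : Continuous (iterLie F k W) :=
  (iterLie_contDiff hF hW k hk).continuous


theorem stmt10 (d r : ℕ) (hr : 1 ≤ r)
    (F : EuclideanSpace ℝ (Fin d) → EuclideanSpace ℝ (Fin d)) (hF : ContDiff ℝ r F)
    (W : EuclideanSpace ℝ (Fin d) → ℝ) (hW : ContDiff ℝ (r + 1) W)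
    (hproper : ∀ c : ℝ, IsCompact {x | W x ≤ c}) (Q : ℝ)
    (hnonzero : ∀ x, Q < W x → ∃ k ∈ Finset.Icc 1 r, iterLie F k W x ≠ 0) :
    ∃ φ Φ : ℝ → ℝ,
      ContDiffOn ℝ (⊤ : ℕ∞) φ (Set.Ioi Q) ∧ ContDiffOn ℝ (⊤ : ℕ∞) Φ (Set.Ioi Q) ∧
      (∀ w ∈ Set.Ioi Q, 0 < φ w) ∧ (∀ w ∈ Set.Ioi Q, 0 < Φ w) ∧
      (∀ w ∈ Set.Ioi Q, φ w ≤ Φ w ^ 2) ∧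
      (∀ x, Q < W x →
        (φ (W x) ≤ |iterLie F 1 W x| + ∑ k ∈ Finset.Icc 2 r, (iterLie F k W x) ^ 2) ∧
        ∀ k ∈ Finset.Icc 1 (r + 1), |iterLie F k W x| ≤ Φ (W x)) := by
  classical
  have hcont : ∀ k, k ≤ r + 1 → Continuous (iterLie F k W) :=
    fun k hk => iterLie_continuous hF hW hk
  set h : EuclideanSpace ℝ (Fin d) → ℝ :=
    fun x => |iterLie F 1 W x| + ∑ k ∈ Finset.Icc 2 r, (iterLie F k W x) ^ 2 with hh
  have hcont_h : Continuous h := by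
    apply ((hcont 1 (by omega)).abs).add
    exact continuous_finset_sum _ fun k hk =>
      (hcont k (by have := (Finset.mem_Icc.mp hk).2; omega)).pow 2
  have hpos : ∀ x, Q < W x → 0 < h x := by
    intro x hx
    obtain ⟨k, hkmem, hkne⟩ := hnonzero x hx
    obtain ⟨hk1, hkr⟩ := Finset.mem_Icc.mp hkmem
    have hsq : (0:ℝ) ≤ ∑ j ∈ Finset.Icc 2 r, (iterLie F j W x) ^ 2 :=
      Finset.sum_nonneg fun j _ => sq_nonneg _
    rcases eq_or_lt_of_le hk1 with hk | hk
    · have : 0 < |iterLie F 1 W x| := abs_pos.mpr (hk ▸ hkne)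
      exact add_pos_of_pos_of_nonneg this hsq
    · have hmem : k ∈ Finset.Icc 2 r := Finset.mem_Icc.mpr ⟨by omega, hkr⟩
      have h1 : (iterLie F k W x) ^ 2 ≤ ∑ j ∈ Finset.Icc 2 r, (iterLie F j W x) ^ 2 :=
        Finset.single_le_sum (f := fun j => (iterLie F j W x) ^ 2) (fun j _ => sq_nonneg _) hmem
      have h2 : 0 < (iterLie F k W x) ^ 2 := pow_two_pos_of_ne_zero hkne
      have : 0 ≤ |iterLie F 1 W x| := abs_nonneg _
      show (0:ℝ) < |iterLie F 1 W x| + ∑ j ∈ Finset.Icc 2 r, (iterLie F j W x) ^ 2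
      linarith
  set T : EuclideanSpace ℝ (Fin d) → ℝ :=
    fun x => (∑ k ∈ Finset.Icc 1 (r + 1), |iterLie F k W x|) + (h x)⁻¹ with hT
  set K : ℕ → Set (EuclideanSpace ℝ (Fin d)) :=
    fun n => {x | Q + ((n:ℝ) + 2)⁻¹ ≤ W x} ∩ {x | W x ≤ Q + (n:ℝ) + 2} with hK
  have hKQ : ∀ n, ∀ x ∈ K n, Q < W x := by
    intro n x hx
    have h1 : Q + ((n:ℝ) + 2)⁻¹ ≤ W x := hx.1
    have h2 : (0:ℝ) < ((n:ℝ) + 2)⁻¹ := by positivity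
    linarith
  have hKcl : ∀ n, IsClosed (K n) :=
    fun n => (isClosed_le continuous_const hW.continuous).inter
      (isClosed_le hW.continuous continuous_const)
  have hKcomp : ∀ n, IsCompact (K n) := by
    intro n
    exact (hproper (Q + (n:ℝ) + 2)).of_isClosed_subset (hKcl n) fun x hx => hx.2
  have hTcont : ∀ n, ContinuousOn T (K n) := by
    intro n
    apply ContinuousOn.add
    · exact (continuous_finset_sum _ fun k hk =>
        (hcont k (Finset.mem_Icc.mp hk).2).abs).continuousOn
    · exact ContinuousOn.inv₀ hcont_h.continuousOn
        fun x hx => ne_of_gt (hpos x (hKQ n x hx))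
  set B : ℕ → ℝ := fun n => sSup (T '' K n) with hB
  set D : ℕ → ℝ := fun n => 1 + ((n - 1 : ℕ) : ℝ) ^ 2 with hD
  have hD1 : ∀ n, 1 ≤ D n := fun n => le_add_of_nonneg_right (sq_nonneg _)
  have hDtop : Tendsto D atTop atTop := by
    apply tendsto_atTop_mono ?_ (tendsto_atTop_add_const_right atTop (-1)
      (tendsto_natCast_atTop_atTop (R := ℝ)))
    intro n
    have h1 : (n:ℝ) - 1 ≤ ((n - 1 : ℕ) : ℝ) := by
      rcases Nat.eq_zero_or_pos n with h | h
      · subst h; norm_num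
      · rw [Nat.cast_sub h]; push_cast; linarith
    have h2 : ((n - 1 : ℕ) : ℝ) ≤ D n := by
      simp only [hD]; nlinarith [sq_nonneg (((n - 1 : ℕ) : ℝ) - 1)]
    have h3 : ((n:ℝ)) + (-1) ≤ D n := by linarith
    exact h3
  obtain ⟨g, hg, hg0, hgB⟩ := exists_entire B D hD1 hDtop
  set s : ℝ → ℝ := fun w => 1 + (w - Q) ^ 2 + ((w - Q) ^ 2)⁻¹ with hs
  have hs_nonneg : ∀ w, 0 ≤ s w := by
    intro w
    have : (0:ℝ) ≤ ((w - Q) ^ 2)⁻¹ := by positivity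
    simp only [hs]; nlinarith [sq_nonneg (w - Q)]
  have hΦpos : ∀ w, 0 < 1 + g (s w) := by
    intro w
    have := hg0 (s w) (hs_nonneg w)
    linarith
  have hs_smooth : ContDiffOn ℝ (⊤ : ℕ∞) s (Set.Ioi Q) := by
    have h1 : ContDiff ℝ (⊤ : ℕ∞) (fun w : ℝ => (w - Q) ^ 2) :=
      (contDiff_id.sub contDiff_const).pow 2
    have h2 : ContDiffOn ℝ (⊤ : ℕ∞) (fun w : ℝ => ((w - Q) ^ 2)⁻¹) (Set.Ioi Q) := by
      apply h1.contDiffOn.inv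
      intro w hw
      have hQw : Q < w := hw
      have : (0:ℝ) < (w - Q) ^ 2 := pow_pos (by linarith) 2
      exact ne_of_gt this
    exact (contDiffOn_const.add h1.contDiffOn).add h2
  have hΦsmooth : ContDiffOn ℝ (⊤ : ℕ∞) (fun w => 1 + g (s w)) (Set.Ioi Q) :=
    contDiffOn_const.add (hg.comp_contDiffOn hs_smooth)
  refine ⟨fun w => (1 + g (s w))⁻¹, fun w => 1 + g (s w), ?_, hΦsmooth, ?_, ?_, ?_, ?_⟩
  · exact hΦsmooth.inv fun w _ => ne_of_gt (hΦpos w)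
  · exact fun w _ => inv_pos.mpr (hΦpos w)
  · exact fun w _ => hΦpos w
  · intro w _
    have h1 := hg0 (s w) (hs_nonneg w)
    have h2 : (1 + g (s w))⁻¹ ≤ 1 := by
      rw [inv_le_one_iff₀]; right; linarith
    nlinarith
  · intro x hx
    set w := W x with hw
    set u := w - Q with hu
    have hupos : 0 < u := by simp only [hu]; linarith
    set m := max u u⁻¹ with hm
    have hm1 : 1 ≤ m := by
      by_contra hc
      push_neg at hc
      have h1 : u < 1 := lt_of_le_of_lt (le_max_left _ _) hc
      have h2 : u⁻¹ < 1 := lt_of_le_of_lt (le_max_right _ _) hc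
      nlinarith [mul_inv_cancel₀ (ne_of_gt hupos), inv_pos.mpr hupos]
    set n := ⌈m⌉₊ with hn
    have hn_ge : m ≤ (n:ℝ) := Nat.le_ceil m
    have hn_lt : (n:ℝ) < m + 1 := Nat.ceil_lt_add_one (by linarith)
    have hn1 : 1 ≤ n := Nat.one_le_cast.mp (le_trans hm1 hn_ge)
    have hum : u ≤ m := le_max_left _ _
    have huim : u⁻¹ ≤ m := le_max_right _ _
    have hxK : x ∈ K n := by
      constructor
      · show Q + ((n:ℝ) + 2)⁻¹ ≤ W x
        have h1 : u⁻¹ ≤ (n:ℝ) + 2 := by linarith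
        have h2 : ((n:ℝ) + 2)⁻¹ ≤ u := inv_le_of_inv_le₀ hupos h1
        simp only [hu, hw] at h2 ⊢
        linarith
      · show W x ≤ Q + (n:ℝ) + 2
        simp only [hu, hw] at hum
        linarith
    have hDs : D n ≤ s w := by
      have hc : ((n - 1 : ℕ) : ℝ) ≤ m := by
        rw [Nat.cast_sub hn1]
        push_cast
        linarith
      have hc0 : (0:ℝ) ≤ ((n - 1 : ℕ) : ℝ) := Nat.cast_nonneg _
      have hmsq : m ^ 2 ≤ u ^ 2 + (u⁻¹) ^ 2 := by
        rcases max_cases u u⁻¹ with ⟨he, _⟩ | ⟨he, _⟩ <;>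
          · rw [hm, he]; nlinarith [sq_nonneg u, sq_nonneg u⁻¹]
      have hinv : (u⁻¹) ^ 2 = (u ^ 2)⁻¹ := by rw [← inv_pow]
      have : ((n - 1 : ℕ) : ℝ) ^ 2 ≤ m ^ 2 := by nlinarith
      simp only [hD, hs, ← hu]
      rw [← hinv]
      linarith
    have hTB : T x ≤ B n :=
      le_csSup ((hKcomp n).image_of_continuousOn (hTcont n)).bddAbove ⟨x, hxK, rfl⟩
    have hBg : B n ≤ g (s w) := hgB n (s w) hDs
    have hhx : 0 < h x := hpos x hx
    have hsum_abs : (0:ℝ) ≤ ∑ k ∈ Finset.Icc 1 (r + 1), |iterLie F k W x| :=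
      Finset.sum_nonneg fun k _ => abs_nonneg _
    constructor
    · -- lower bound
      have h1 : (h x)⁻¹ ≤ T x := by simp only [hT]; linarith
      have h2 : (h x)⁻¹ ≤ 1 + g (s w) :=
        le_trans h1 (le_trans hTB (le_trans hBg (by linarith [hg0 (s w) (hs_nonneg w)])))
      have h3 : (1 + g (s w))⁻¹ ≤ h x := inv_le_of_inv_le₀ hhx h2
      exact h3
    · intro k hk
      have h1 : |iterLie F k W x| ≤ ∑ j ∈ Finset.Icc 1 (r + 1), |iterLie F j W x| :=
        Finset.single_le_sum (f := fun j => |iterLie F j W x|) (fun j _ => abs_nonneg _) hk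
      have h2 : (0:ℝ) ≤ (h x)⁻¹ := le_of_lt (inv_pos.mpr hhx)
      have h3 : |iterLie F k W x| ≤ T x := by simp only [hT]; linarith
      have := hg0 (s w) (hs_nonneg w)
      calc |iterLie F k W x| ≤ T x := h3
        _ ≤ g (s w) := le_trans hTB hBg
        _ ≤ 1 + g (s w) := by linarith
end
end
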